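/- arXiv:2504.11254 — 3 statements merged into one kernel-verified Lean document; each statement's English description precedes it below -/
import Mathlib

section
/- Let E be a finite-dimensional real inner product space, let φ : E → ℝ be convex and differentiable with L-Lipschitz gradient for some L > 0, and suppose the set of minimizers of φ is nonempty. Let 0 < γ ≤ 1/L and define v_{k+1} = v_k − γ•∇φ(v_k) from an arbitrary starting point v_0. Then there exists a constant C > 0 such that ‖v_k − v_{k−1}‖ ≤ C/√k for every k ≥ 1. -/
/-! Since `φ` is convex with `L`-Lipschitz gradient, `∇φ` is `1/L`-cocoercive
(Baillon–Haddad), which makes the gradient step `T = id - γ ∇φ` firmly nonexpansive for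
`γ ≤ 1/L`; a minimizer `m` is a fixed point of `T`. Along an orbit of a firmly nonexpansive map,
`‖v (k+1) - m‖² + ‖v (k+1) - v k‖² ≤ ‖v k - m‖²`, so the squared steps sum to at most
`‖v 0 - m‖²`, and they are nonincreasing because `T` is nonexpansive. Hence
`(k + 1) ‖v (k+1) - v k‖² ≤ ‖v 0 - m‖²`. -/

open RealInnerProductSpace Set Function Finset

section FirmlyNonexpansive

variable {E : Type*} [NormedAddCommGroup E]

def FirmlyNonexpansive (T : E → E) : Prop :=
  ∀ x y, ‖T x - T y‖ ^ 2 + ‖(x - T x) - (y - T y)‖ ^ 2 ≤ ‖x - y‖ ^ 2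

namespace FirmlyNonexpansive

variable {T : E → E} (hT : FirmlyNonexpansive T)
include hT

theorem norm_sub_le (x y : E) : ‖T x - T y‖ ≤ ‖x - y‖ :=
  (pow_le_pow_iff_left₀ (norm_nonneg _) (norm_nonneg _) two_ne_zero).1 <|
    le_of_add_le_of_nonneg_left (hT x y) (sq_nonneg _)

theorem sq_norm_sub_fixedPt_add_le {m : E} (hm : IsFixedPt T m) (x : E) :
    ‖T x - m‖ ^ 2 + ‖x - T x‖ ^ 2 ≤ ‖x - m‖ ^ 2 := by
  simpa [hm.eq] using hT x m

variable {m : E} (hm : IsFixedPt T m) {v : ℕ → E} (hv : ∀ k, v (k + 1) = T (v k))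
include hv

theorem antitone_norm_succ_sub : Antitone fun k => ‖v (k + 1) - v k‖ :=
  antitone_nat_of_succ_le fun k => by
    simpa only [hv (k + 1), hv k] using hT.norm_sub_le (v (k + 1)) (v k)

include hm

theorem sum_sq_norm_succ_sub_le (k : ℕ) :
    ∑ j ∈ range k, ‖v (j + 1) - v j‖ ^ 2 ≤ ‖v 0 - m‖ ^ 2 - ‖v k - m‖ ^ 2 := by
  induction k with
  | zero => simp
  | succ k ih =>
    have hstep := hT.sq_norm_sub_fixedPt_add_le hm (v k)
    rw [← hv k, norm_sub_rev (v k)] at hstep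
    rw [sum_range_succ]
    linarith

theorem norm_succ_sub_le_div_sqrt (k : ℕ) :
    ‖v (k + 1) - v k‖ ≤ ‖v 0 - m‖ / √(k + 1) := by
  have hsum : (k + 1 : ℝ) * ‖v (k + 1) - v k‖ ^ 2 ≤ ‖v 0 - m‖ ^ 2 :=
    calc (k + 1 : ℝ) * ‖v (k + 1) - v k‖ ^ 2
        ≤ ∑ j ∈ range (k + 1), ‖v (j + 1) - v j‖ ^ 2 := by
          simpa using card_nsmul_le_sum (range (k + 1)) (fun j => ‖v (j + 1) - v j‖ ^ 2) _
            fun j hj => pow_le_pow_left₀ (norm_nonneg _)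
              (hT.antitone_norm_succ_sub hv (mem_range_succ_iff.1 hj)) 2
      _ ≤ ‖v 0 - m‖ ^ 2 := by
          linarith [hT.sum_sq_norm_succ_sub_le hm hv (k + 1), sq_nonneg ‖v (k + 1) - m‖]
  rw [le_div_iff₀ (by positivity), ← Real.sqrt_sq (norm_nonneg (v 0 - m)),
    ← Real.sqrt_sq (norm_nonneg (v (k + 1) - v k)), ← Real.sqrt_mul (sq_nonneg _)]
  exact Real.sqrt_le_sqrt (by linarith)

end FirmlyNonexpansive

end FirmlyNonexpansive

section Gradient

variable {E : Type*} [NormedAddCommGroup E] [InnerProductSpace ℝ E] [CompleteSpace E]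
  {φ : E → ℝ} {φ' : E → E} {L : ℝ}

theorem IsLocalMin.hasGradientAt_eq_zero {g a : E} (h : IsLocalMin φ a)
    (hg : HasGradientAt φ g a) : g = 0 := by
  simpa using h.hasFDerivAt_eq_zero hg.hasFDerivAt

theorem HasGradientAt.hasDerivAt_add_smul {g x d : E} {t : ℝ}
    (h : HasGradientAt φ g (x + t • d)) : HasDerivAt (fun s : ℝ => φ (x + s • d)) ⟪g, d⟫ t := by
  have hline : HasDerivAt (fun s : ℝ => x + s • d) d t := by
    simpa using ((hasDerivAt_id t).smul_const d).const_add x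
  simpa [comp_def] using h.hasFDerivAt.comp_hasDerivAt t hline

theorem ConvexOn.add_inner_le_of_hasGradientAt (hconv : ConvexOn ℝ univ φ) {g x : E}
    (hg : HasGradientAt φ g x) (y : E) : φ x + ⟪g, y - x⟫ ≤ φ y := by
  have hline : ConvexOn ℝ univ (fun t : ℝ => φ (x + t • (y - x))) := by
    simpa [comp_def, AffineMap.lineMap_apply, add_comm] using
      hconv.comp_affineMap (AffineMap.lineMap x y)
  have hderiv := HasGradientAt.hasDerivAt_add_smul (t := 0) (d := y - x) (by simpa using hg)
  have := hline.le_slope_of_hasDerivAt (mem_univ 0) (mem_univ 1) one_pos hderiv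
  simp only [slope_def_field, one_smul, add_sub_cancel, zero_smul, add_zero, sub_zero,
    div_one] at this
  linarith

theorem le_add_inner_add_sq_of_lipschitz_gradient (hdiff : ∀ x, HasGradientAt φ (φ' x) x)
    (hlip : ∀ x y, ‖φ' x - φ' y‖ ≤ L * ‖x - y‖) (x y : E) :
    φ y ≤ φ x + ⟪φ' x, y - x⟫ + L / 2 * ‖y - x‖ ^ 2 := by
  set d := y - x
  let h : ℝ → ℝ := fun t => φ (x + t • d) - t * ⟪φ' x, d⟫ - L / 2 * t ^ 2 * ‖d‖ ^ 2
  have hderiv : ∀ t, HasDerivAt h (⟪φ' (x + t • d) - φ' x, d⟫ - L * t * ‖d‖ ^ 2) t := by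
    intro t
    refine ((((hdiff (x + t • d)).hasDerivAt_add_smul).sub
      ((hasDerivAt_id t).mul_const ⟪φ' x, d⟫)).sub
      (((hasDerivAt_pow 2 t).const_mul (L / 2)).mul_const (‖d‖ ^ 2))).congr_deriv ?_
    simp only [inner_sub_left, Nat.cast_ofNat]
    ring
  have hcont : Continuous h := continuous_iff_continuousAt.2 fun t => (hderiv t).continuousAt
  obtain ⟨c, hc, hslope⟩ :=
    exists_hasDerivAt_eq_slope h _ one_pos hcont.continuousOn fun t _ => hderiv t
  have hnonpos : ⟪φ' (x + c • d) - φ' x, d⟫ - L * c * ‖d‖ ^ 2 ≤ 0 := by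
    have : ⟪φ' (x + c • d) - φ' x, d⟫ ≤ L * c * ‖d‖ ^ 2 :=
      calc ⟪φ' (x + c • d) - φ' x, d⟫ ≤ ‖φ' (x + c • d) - φ' x‖ * ‖d‖ := real_inner_le_norm _ _
        _ ≤ L * ‖c • d‖ * ‖d‖ := by
          simpa using mul_le_mul_of_nonneg_right (hlip (x + c • d) x) (norm_nonneg d)
        _ = L * c * ‖d‖ ^ 2 := by rw [norm_smul, Real.norm_of_nonneg hc.1.le]; ring
    linarith
  have h0 : h 0 = φ x := by simp [h]
  have h1 : h 1 = φ y - ⟪φ' x, d⟫ - L / 2 * ‖d‖ ^ 2 := by simp [h, d]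
  rw [hslope, h0, h1, sub_zero, div_one] at hnonpos
  linarith

theorem ConvexOn.add_inner_add_sq_norm_div_le (hconv : ConvexOn ℝ univ φ)
    (hdiff : ∀ x, HasGradientAt φ (φ' x) x) (hlip : ∀ x y, ‖φ' x - φ' y‖ ≤ L * ‖x - y‖)
    (hL : 0 < L) (x y : E) :
    φ x + ⟪φ' x, y - x⟫ + ‖φ' y - φ' x‖ ^ 2 / (2 * L) ≤ φ y := by
  set w := φ' y - φ' x
  -- Evaluate both bounds at `y - L⁻¹ • w`, a gradient step from `y` for `φ - ⟪φ' x, ·⟫`.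
  have hfirst := hconv.add_inner_le_of_hasGradientAt (hdiff x) (y - L⁻¹ • w)
  have hdesc := le_add_inner_add_sq_of_lipschitz_gradient hdiff hlip y (y - L⁻¹ • w)
  rw [sub_right_comm, inner_sub_right, real_inner_smul_right] at hfirst
  rw [sub_sub_cancel_left, inner_neg_right, real_inner_smul_right, norm_neg, norm_smul,
    Real.norm_of_nonneg (inv_nonneg.2 hL.le)] at hdesc
  have hw : ⟪φ' y, w⟫ - ⟪φ' x, w⟫ = ‖w‖ ^ 2 := by
    rw [← inner_sub_left, real_inner_self_eq_norm_sq]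
  have hLinv : L * L⁻¹ = 1 := mul_inv_cancel₀ hL.ne'
  linear_combination hfirst + hdesc - L⁻¹ * hw + L⁻¹ * ‖w‖ ^ 2 / 2 * hLinv

theorem ConvexOn.sq_norm_sub_div_le_inner (hconv : ConvexOn ℝ univ φ)
    (hdiff : ∀ x, HasGradientAt φ (φ' x) x) (hlip : ∀ x y, ‖φ' x - φ' y‖ ≤ L * ‖x - y‖)
    (hL : 0 < L) (x y : E) :
    ‖φ' x - φ' y‖ ^ 2 / L ≤ ⟪φ' x - φ' y, x - y⟫ := by
  have hxy := hconv.add_inner_add_sq_norm_div_le hdiff hlip hL x y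
  have hyx := hconv.add_inner_add_sq_norm_div_le hdiff hlip hL y x
  rw [norm_sub_rev] at hxy
  have hinner : ⟪φ' x - φ' y, x - y⟫ = -⟪φ' x, y - x⟫ - ⟪φ' y, x - y⟫ := by
    rw [inner_sub_left, ← inner_neg_right, neg_sub]
  linear_combination hxy + hyx - hinner

theorem ConvexOn.firmlyNonexpansive_sub_smul (hconv : ConvexOn ℝ univ φ)
    (hdiff : ∀ x, HasGradientAt φ (φ' x) x) (hlip : ∀ x y, ‖φ' x - φ' y‖ ≤ L * ‖x - y‖)
    (hL : 0 < L) {γ : ℝ} (hγ0 : 0 ≤ γ) (hγ1 : γ ≤ 1 / L) :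
    FirmlyNonexpansive fun x => x - γ • φ' x := by
  intro x y
  have hstep : ‖γ • (φ' x - φ' y)‖ ^ 2 ≤ ⟪x - y, γ • (φ' x - φ' y)⟫ := by
    rw [norm_smul, Real.norm_of_nonneg hγ0, real_inner_smul_right, real_inner_comm]
    calc (γ * ‖φ' x - φ' y‖) ^ 2 = γ * (γ * ‖φ' x - φ' y‖ ^ 2) := by ring
      _ ≤ γ * (1 / L * ‖φ' x - φ' y‖ ^ 2) := by gcongr
      _ = γ * (‖φ' x - φ' y‖ ^ 2 / L) := by ring
      _ ≤ γ * ⟪φ' x - φ' y, x - y⟫ := by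
          gcongr
          exact hconv.sq_norm_sub_div_le_inner hdiff hlip hL x y
  have hT : x - γ • φ' x - (y - γ • φ' y) = (x - y) - γ • (φ' x - φ' y) := by
    rw [smul_sub]; abel
  have hI : x - (x - γ • φ' x) - (y - (y - γ • φ' y)) = γ • (φ' x - φ' y) := by
    rw [smul_sub]; abel
  rw [hT, hI, norm_sub_sq_real]
  linarith

end Gradient

/-- Rate for the successive differences of gradient descent with step
`0 < γ ≤ 1/L` on a convex function with `L`-Lipschitz gradient and a
nonempty set of minimizers: `‖v_k - v_{k-1}‖ ≤ C / √k`. -/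
theorem stmt_3
    {E : Type*} [NormedAddCommGroup E] [InnerProductSpace ℝ E] [FiniteDimensional ℝ E]
    (φ : E → ℝ) (φ' : E → E) (L γ : ℝ) (hL : 0 < L)
    (hconv : ConvexOn ℝ Set.univ φ)
    (hdiff : ∀ x : E, HasGradientAt φ (φ' x) x)
    (hlip : ∀ x y : E, ‖φ' x - φ' y‖ ≤ L * ‖x - y‖)
    (hmin : ∃ m : E, IsMinOn φ Set.univ m)
    (hγ0 : 0 < γ) (hγ1 : γ ≤ 1 / L)
    (v : ℕ → E) (hrec : ∀ k : ℕ, v (k + 1) = v k - γ • φ' (v k)) :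
    ∃ C > (0 : ℝ), ∀ k : ℕ, 1 ≤ k → ‖v k - v (k - 1)‖ ≤ C / Real.sqrt k := by
  obtain ⟨m, hm⟩ := hmin
  have hT := hconv.firmlyNonexpansive_sub_smul hdiff hlip hL hγ0.le hγ1
  have hfix : IsFixedPt (fun x => x - γ • φ' x) m := by
    simp [IsFixedPt, (hm.isLocalMin Filter.univ_mem).hasGradientAt_eq_zero (hdiff m)]
  refine ⟨‖v 0 - m‖ + 1, by positivity, fun k hk => ?_⟩
  obtain ⟨n, rfl⟩ := Nat.exists_eq_add_of_le' hk
  calc ‖v (n + 1) - v (n + 1 - 1)‖ = ‖v (n + 1) - v n‖ := by rw [Nat.add_sub_cancel]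
    _ ≤ ‖v 0 - m‖ / √(n + 1) := hT.norm_succ_sub_le_div_sqrt hfix hrec n
    _ ≤ (‖v 0 - m‖ + 1) / √↑(n + 1) := by push_cast; gcongr; linarith
end

section
/- Let E be a real normed vector space, let F : E → E be nonexpansive, let γ ≥ 0, let y, y' ∈ E, and let (t_k)_{k≥0} be a sequence of real numbers with 0 ≤ t_k ≤ 1. Define two inertial sequences as follows: v_0 = v'_0, u_{−1} = u'_{−1}, and for k ≥ 0, u_k = F(v_k) − γ•y, u'_k = F(v'_k) − γ•y', v_{k+1} = u_k + t_k•(u_k − u_{k−1}), v'_{k+1} = u'_k + t_k•(u'_k − u'_{k−1}). Then for every k ≥ 0, ‖u_k − u'_k‖ ≤ Σ_{i=0}^{k−1} t_i (‖u_i − u_{i−1}‖ + ‖u'_i − u'_{i−1}‖) + γ (k+1) ‖y − y'‖. -/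
/-!
Write `d_k = ‖v_k - v'_k‖`. Nonexpansiveness of `F` gives
`‖u_k - u'_k‖ ≤ d_k + γ ‖y - y'‖`, and the triangle inequality applied to the extrapolation step
gives `d_{k+1} ≤ ‖u_k - u'_k‖ + t_k (‖u_k - u_{k-1}‖ + ‖u'_k - u'_{k-1}‖)`. Since `d_0 = 0`,
telescoping the resulting one-step bound on `d` and applying the first estimate once more
yields the claim.
-/

open Finset

lemma le_sum_range_of_le_add {d c : ℕ → ℝ} (h0 : d 0 ≤ 0) (hstep : ∀ k, d (k + 1) ≤ d k + c k)
    (k : ℕ) : d k ≤ ∑ i ∈ range k, c i := by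
  induction k with
  | zero => simpa using h0
  | succ k ih => rw [sum_range_succ]; linarith [hstep k]

section Inertial

variable {E : Type*} [NormedAddCommGroup E] [NormedSpace ℝ E]

lemma norm_sub_smul_sub_sub_smul_le {F : E → E} (hF : ∀ x y : E, ‖F x - F y‖ ≤ ‖x - y‖)
    {γ : ℝ} (hγ : 0 ≤ γ) (a b y y' : E) :
    ‖(F a - γ • y) - (F b - γ • y')‖ ≤ ‖a - b‖ + γ * ‖y - y'‖ := by
  have hsplit : (F a - γ • y) - (F b - γ • y') = (F a - F b) - γ • (y - y') := by
    rw [smul_sub]; abel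
  calc ‖(F a - γ • y) - (F b - γ • y')‖ ≤ ‖F a - F b‖ + ‖γ • (y - y')‖ := by
        rw [hsplit]; exact norm_sub_le _ _
    _ ≤ ‖a - b‖ + γ * ‖y - y'‖ := by
        rw [norm_smul, Real.norm_of_nonneg hγ]; gcongr; exact hF a b

lemma norm_extrapolate_sub_extrapolate_le {t : ℝ} (ht : 0 ≤ t) (a b a' b' : E) :
    ‖(a + t • (a - b)) - (a' + t • (a' - b'))‖ ≤ ‖a - a'‖ + t * (‖a - b‖ + ‖a' - b'‖) := by
  have hsplit : (a + t • (a - b)) - (a' + t • (a' - b')) = (a - a') + t • ((a - b) - (a' - b')) := by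
    module
  calc ‖(a + t • (a - b)) - (a' + t • (a' - b'))‖ ≤ ‖a - a'‖ + ‖t • ((a - b) - (a' - b'))‖ := by
        rw [hsplit]; exact norm_add_le _ _
    _ ≤ ‖a - a'‖ + t * (‖a - b‖ + ‖a' - b'‖) := by
        rw [norm_smul, Real.norm_of_nonneg ht]; gcongr; exact norm_sub_le _ _

end Inertial

theorem stmt_7_general
    {E : Type*} [NormedAddCommGroup E] [NormedSpace ℝ E]
    (F : E → E) (hF : ∀ x y : E, ‖F x - F y‖ ≤ ‖x - y‖)
    (γ : ℝ) (hγ : 0 ≤ γ) (y y' : E)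
    (t : ℕ → ℝ) (ht0 : ∀ k : ℕ, 0 ≤ t k)
    (v v' U U' : ℕ → E)
    (hv0 : v 0 = v' 0)
    (hu : ∀ k : ℕ, U (k + 1) = F (v k) - γ • y)
    (hu' : ∀ k : ℕ, U' (k + 1) = F (v' k) - γ • y')
    (hv : ∀ k : ℕ, v (k + 1) = U (k + 1) + t k • (U (k + 1) - U k))
    (hv' : ∀ k : ℕ, v' (k + 1) = U' (k + 1) + t k • (U' (k + 1) - U' k)) :
    ∀ k : ℕ, ‖U (k + 1) - U' (k + 1)‖ ≤
      (∑ i ∈ Finset.range k, t i * (‖U (i + 1) - U i‖ + ‖U' (i + 1) - U' i‖))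
        + γ * (k + 1) * ‖y - y'‖ := by
  have hU : ∀ k, ‖U (k + 1) - U' (k + 1)‖ ≤ ‖v k - v' k‖ + γ * ‖y - y'‖ := fun k => by
    rw [hu, hu']; exact norm_sub_smul_sub_sub_smul_le hF hγ _ _ _ _
  have hvstep : ∀ k, ‖v (k + 1) - v' (k + 1)‖ ≤ ‖v k - v' k‖
      + (t k * (‖U (k + 1) - U k‖ + ‖U' (k + 1) - U' k‖) + γ * ‖y - y'‖) := fun k => by
    rw [hv, hv']
    linarith [norm_extrapolate_sub_extrapolate_le (ht0 k) (U (k + 1)) (U k) (U' (k + 1)) (U' k),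
      hU k]
  intro k
  have hvk := le_sum_range_of_le_add (d := fun k => ‖v k - v' k‖) (by simp [hv0]) hvstep k
  rw [sum_add_distrib, sum_const, card_range, nsmul_eq_mul] at hvk
  linarith [hU k]

/-- Perturbation estimate for inertial iterations of a nonexpansive map `F`
with perturbed data `y`, `y'`.  Here `U k` stands for `u_{k-1}` (so
`U 0 = u_{-1}` and `U (k+1) = u_k`), and similarly for `U'`:
`‖u_k - u'_k‖ ≤ Σ_{i=0}^{k-1} t_i (‖u_i - u_{i-1}‖ + ‖u'_i - u'_{i-1}‖) + γ (k+1) ‖y - y'‖`. -/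
theorem stmt_7
    {E : Type*} [NormedAddCommGroup E] [NormedSpace ℝ E]
    (F : E → E) (hF : ∀ x y : E, ‖F x - F y‖ ≤ ‖x - y‖)
    (γ : ℝ) (hγ : 0 ≤ γ) (y y' : E)
    (t : ℕ → ℝ) (ht0 : ∀ k : ℕ, 0 ≤ t k) (ht1 : ∀ k : ℕ, t k ≤ 1)
    (v v' U U' : ℕ → E)
    (hv0 : v 0 = v' 0) (hU0 : U 0 = U' 0)
    (hu : ∀ k : ℕ, U (k + 1) = F (v k) - γ • y)
    (hu' : ∀ k : ℕ, U' (k + 1) = F (v' k) - γ • y')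
    (hv : ∀ k : ℕ, v (k + 1) = U (k + 1) + t k • (U (k + 1) - U k))
    (hv' : ∀ k : ℕ, v' (k + 1) = U' (k + 1) + t k • (U' (k + 1) - U' k)) :
    ∀ k : ℕ, ‖U (k + 1) - U' (k + 1)‖ ≤
      (∑ i ∈ Finset.range k, t i * (‖U (i + 1) - U i‖ + ‖U' (i + 1) - U' i‖))
        + γ * (k + 1) * ‖y - y'‖ :=
  stmt_7_general F hF γ hγ y y' t ht0 v v' U U' hv0 hu hu' hv hv'
end

section
/- Let p, n ≥ 1, let P be a real p×p matrix that is an orthogonal projection (P = Pᵀ and P² = P), let H be a real symmetric positive semidefinite p×p matrix with H = P H P, and let X be a nonzero real n×p matrix such that the only vector v ∈ ℝᵖ with Xv = 0 and Pv = v is v = 0 (restricted injectivity of X on the range of P). Define M = P − ‖X‖⁻² · P (I + H)⁻¹ P Xᵀ X P, where ‖X‖ is the ℓ²-operator norm of X. Then every eigenvalue μ ∈ ℂ of M (as a complex matrix) is real and satisfies 0 ≤ μ < 1; in particular the spectral radius of M is strictly less than 1. -/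
/-! If `M v = μ v` with `μ ≠ 0`, then `P v = v` because `P M = M`. As `P` commutes with
`Q = 1 + H`, one has `Q M = Q P - c (XP)ᵀ(XP)` with `c = ‖X‖⁻²`, and pairing with `v̄` gives
`μ ⟪v, Q v⟫ = ⟪v, Q v⟫ - c ‖X v‖²`. Both quadratic forms are real, and
`0 < c ‖X v‖² ≤ ‖v‖² ≤ ⟪v, Q v⟫` by restricted injectivity, the definition of the operator
norm and `H ⪰ 0`, applied to the real and imaginary parts of `v`; hence `μ = 1 - c ‖X v‖² / ⟪v, Q v⟫ ∈ [0, 1)`. -/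

open Matrix

/-- The `ℓ²`-operator norm of a (possibly rectangular) real matrix. -/
noncomputable def l2OpNorm {n p : ℕ} (X : Matrix (Fin n) (Fin p) ℝ) : ℝ :=
  ‖LinearMap.toContinuousLinearMap (Matrix.toEuclideanLin X)‖

section Dgd

variable {K l m : Type*} [CommRing K] [Fintype m] {P Q : Matrix m m K}

lemma commute_of_eq_mul_mul {H : Matrix m m K} (hP : P * P = P) (hH : H = P * H * P) :
    Commute P H := by
  have hPH : P * H = H := by rw [hH, ← Matrix.mul_assoc, ← Matrix.mul_assoc, hP]
  have hHP : H * P = H := by rw [hH, Matrix.mul_assoc, hP]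
  exact hPH.trans hHP.symm

variable [Fintype l] [DecidableEq m]

/-- `M_DGD` of the paper, with `Q = 1 + H` and `c = ‖X‖⁻²`. -/
noncomputable def dgdMatrix (P Q : Matrix m m K) (X : Matrix l m K) (c : K) : Matrix m m K :=
  P - c • (P * Q⁻¹ * P * Xᵀ * X * P)

variable (X : Matrix l m K) (c : K)

lemma proj_mul_dgdMatrix (hP : P * P = P) : P * dgdMatrix P Q X c = dgdMatrix P Q X c := by
  simp only [dgdMatrix, Matrix.mul_sub, Matrix.mul_smul, ← Matrix.mul_assoc, hP]

lemma mul_dgdMatrix (hPsym : Pᵀ = P) (hP : P * P = P) (hPQ : Commute P Q) (hQ : IsUnit Q.det) :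
    Q * dgdMatrix P Q X c = Q * P - c • ((X * P)ᵀ * (X * P)) := by
  have hQPQ : Q * P * Q⁻¹ = P := by
    rw [← hPQ.eq, Matrix.mul_assoc, mul_nonsing_inv _ hQ, Matrix.mul_one]
  simp only [dgdMatrix, Matrix.mul_sub, Matrix.mul_smul, ← Matrix.mul_assoc, hQPQ, hP,
    transpose_mul, hPsym]

end Dgd

lemma Matrix.exists_mulVec_eq_smul_of_mem_spectrum {K m : Type*} [Field K] [Fintype m]
    [DecidableEq m] {A : Matrix m m K} {μ : K} (h : μ ∈ spectrum K A) :
    ∃ v, v ≠ 0 ∧ A *ᵥ v = μ • v := by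
  rw [← spectrum_toLin', ← Module.End.hasEigenvalue_iff_mem_spectrum] at h
  obtain ⟨v, hv⟩ := h.exists_hasEigenvector
  exact ⟨v, hv.2, by simpa using hv.apply_eq_smul⟩

lemma Matrix.mulVec_eq_self_of_mul_eq {K m : Type*} [Field K] [Fintype m] {P M : Matrix m m K}
    {v : m → K} {μ : K} (hPM : P * M = M) (hv : M *ᵥ v = μ • v) (hμ : μ ≠ 0) : P *ᵥ v = v := by
  have h : μ • (P *ᵥ v) = μ • v := by rw [← mulVec_smul, ← hv, mulVec_mulVec, hPM]
  exact smul_right_injective _ hμ h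

lemma EuclideanSpace.real_norm_toLp_sq {m : Type*} [Fintype m] (u : m → ℝ) :
    ‖WithLp.toLp 2 u‖ ^ 2 = u ⬝ᵥ u := by
  rw [EuclideanSpace.real_norm_sq_eq]
  simp [dotProduct, sq]

lemma dotProduct_mulVec_self_le_l2OpNorm_sq {n p : ℕ} (X : Matrix (Fin n) (Fin p) ℝ)
    (u : Fin p → ℝ) : (X *ᵥ u) ⬝ᵥ (X *ᵥ u) ≤ l2OpNorm X ^ 2 * (u ⬝ᵥ u) := by
  have h : ‖WithLp.toLp 2 (X *ᵥ u)‖ ≤ l2OpNorm X * ‖WithLp.toLp 2 u‖ :=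
    (LinearMap.toContinuousLinearMap (toEuclideanLin X)).le_opNorm (WithLp.toLp 2 u)
  rw [← EuclideanSpace.real_norm_toLp_sq, ← EuclideanSpace.real_norm_toLp_sq, ← mul_pow]
  gcongr

namespace Complex

variable {l m : Type*} [Fintype m]

lemma re_comp_map_ofRealHom_mulVec (R : Matrix l m ℝ) (w : m → ℂ) :
    re ∘ (R.map ofRealHom *ᵥ w) = R *ᵥ (re ∘ w) := by
  ext i
  simp [mulVec, dotProduct, re_sum]

lemma im_comp_map_ofRealHom_mulVec (R : Matrix l m ℝ) (w : m → ℂ) :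
    im ∘ (R.map ofRealHom *ᵥ w) = R *ᵥ (im ∘ w) := by
  ext i
  simp [mulVec, dotProduct, im_sum]

lemma re_star_dotProduct (u w : m → ℂ) :
    (star u ⬝ᵥ w).re = (re ∘ u) ⬝ᵥ (re ∘ w) + (im ∘ u) ⬝ᵥ (im ∘ w) := by
  simp [dotProduct, re_sum, Finset.sum_add_distrib]

lemma im_star_dotProduct_self (w : m → ℂ) : (star w ⬝ᵥ w).im = 0 := by
  simp [dotProduct, im_sum, mul_comm]

open scoped ComplexOrder in
lemma re_star_dotProduct_self_pos [DecidableEq m] {w : m → ℂ} (hw : w ≠ 0) :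
    0 < (star w ⬝ᵥ w).re := by
  simpa using PosDef.one.re_dotProduct_pos hw

lemma star_dotProduct_map_transpose_mulVec [Fintype l] (A : Matrix l m ℝ) (u : m → ℂ)
    (w : l → ℂ) : star u ⬝ᵥ (Aᵀ.map ofRealHom *ᵥ w) = star (A.map ofRealHom *ᵥ u) ⬝ᵥ w := by
  rw [dotProduct_mulVec, transpose_map, vecMul_transpose]
  congr 1
  ext i
  simp [mulVec, dotProduct]

lemma map_ofRealHom_mulVec_ne_zero {P : Matrix m m ℝ} {X : Matrix l m ℝ}
    (hinj : ∀ u : m → ℝ, X *ᵥ u = 0 → P *ᵥ u = u → u = 0) {v : m → ℂ} (hv : v ≠ 0)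
    (hPv : P.map ofRealHom *ᵥ v = v) : X.map ofRealHom *ᵥ v ≠ 0 := by
  intro hXv
  have hre := hinj (re ∘ v) (by rw [← re_comp_map_ofRealHom_mulVec, hXv]; rfl)
    (by rw [← re_comp_map_ofRealHom_mulVec, hPv])
  have him := hinj (im ∘ v) (by rw [← im_comp_map_ofRealHom_mulVec, hXv]; rfl)
    (by rw [← im_comp_map_ofRealHom_mulVec, hPv])
  exact hv (funext fun i ↦ Complex.ext (congrFun hre i) (congrFun him i))

lemma re_star_dotProduct_le_one_add_mulVec [DecidableEq m] {H : Matrix m m ℝ}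
    (hH : H.PosSemidef) (v : m → ℂ) :
    (star v ⬝ᵥ v).re ≤ (star v ⬝ᵥ ((1 + H).map ofRealHom *ᵥ v)).re := by
  have hre := hH.dotProduct_mulVec_nonneg (re ∘ v)
  have him := hH.dotProduct_mulVec_nonneg (im ∘ v)
  simp only [star_trivial] at hre him
  rw [re_star_dotProduct, re_star_dotProduct, re_comp_map_ofRealHom_mulVec,
    im_comp_map_ofRealHom_mulVec, add_mulVec, add_mulVec, one_mulVec, one_mulVec, dotProduct_add,
    dotProduct_add]
  linarith

lemma im_star_dotProduct_map_mulVec_self {R : Matrix m m ℝ} (hR : R.IsHermitian) (v : m → ℂ) :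
    (star v ⬝ᵥ (R.map ofRealHom *ᵥ v)).im = 0 :=
  (hR.map ofRealHom fun x ↦ by simp).im_star_dotProduct_mulVec_self v

lemma re_star_dotProduct_mulVec_le_l2OpNorm_sq {n p : ℕ} (X : Matrix (Fin n) (Fin p) ℝ)
    (v : Fin p → ℂ) :
    (star (X.map ofRealHom *ᵥ v) ⬝ᵥ (X.map ofRealHom *ᵥ v)).re ≤
      l2OpNorm X ^ 2 * (star v ⬝ᵥ v).re := by
  rw [re_star_dotProduct, re_star_dotProduct, re_comp_map_ofRealHom_mulVec,
    im_comp_map_ofRealHom_mulVec, mul_add]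
  exact add_le_add (dotProduct_mulVec_self_le_l2OpNorm_sq X _)
    (dotProduct_mulVec_self_le_l2OpNorm_sq X _)

lemma im_eq_zero_and_re_mem_Ico_of_mul_eq {μ q s : ℂ} {c : ℝ} (h : μ * q = q - c * s)
    (hq : q.im = 0) (hs : s.im = 0) (hpos : 0 < c * s.re) (hle : c * s.re ≤ q.re) :
    μ.im = 0 ∧ 0 ≤ μ.re ∧ μ.re < 1 := by
  have hre := congrArg re h
  have him := congrArg im h
  simp only [mul_re, mul_im, sub_re, sub_im, ofReal_re, ofReal_im, hq, hs] at hre him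
  have hq0 : 0 < q.re := hpos.trans_le hle
  refine ⟨?_, ?_, ?_⟩ <;> nlinarith

end Complex

open Complex

lemma mul_star_dotProduct_eq_of_dgdMatrix_mulVec_eq_smul {l m : Type*} [Fintype l] [Fintype m]
    [DecidableEq m] {P Q : Matrix m m ℝ} (X : Matrix l m ℝ) (c : ℝ) (hPsym : Pᵀ = P)
    (hP : P * P = P) (hPQ : Commute P Q) (hQ : IsUnit Q.det) {μ : ℂ} {v : m → ℂ}
    (hv : (dgdMatrix P Q X c).map ofRealHom *ᵥ v = μ • v) (hPv : P.map ofRealHom *ᵥ v = v) :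
    μ * (star v ⬝ᵥ (Q.map ofRealHom *ᵥ v)) = star v ⬝ᵥ (Q.map ofRealHom *ᵥ v) -
      c * (star (X.map ofRealHom *ᵥ v) ⬝ᵥ (X.map ofRealHom *ᵥ v)) := by
  have hQM : (Q * dgdMatrix P Q X c).map ofRealHom =
      Q.map ofRealHom * P.map ofRealHom - c • ((X * P)ᵀ.map ofRealHom * (X * P).map ofRealHom) := by
    rw [mul_dgdMatrix X c hPsym hP hPQ hQ, Matrix.map_sub _ (map_sub ofRealHom),
      Matrix.map_smul _ _ (fun a ↦ by simp), Matrix.map_mul, Matrix.map_mul]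
  have hXPv : (X * P).map ofRealHom *ᵥ v = X.map ofRealHom *ᵥ v := by
    rw [Matrix.map_mul, ← mulVec_mulVec, hPv]
  calc μ * (star v ⬝ᵥ (Q.map ofRealHom *ᵥ v))
      = star v ⬝ᵥ ((Q * dgdMatrix P Q X c).map ofRealHom *ᵥ v) := by
        rw [Matrix.map_mul, ← mulVec_mulVec, hv, mulVec_smul, dotProduct_smul, smul_eq_mul]
    _ = star v ⬝ᵥ (Q.map ofRealHom *ᵥ v) -
          c * (star ((X * P).map ofRealHom *ᵥ v) ⬝ᵥ ((X * P).map ofRealHom *ᵥ v)) := by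
        rw [hQM, sub_mulVec, smul_mulVec, ← mulVec_mulVec, hPv, dotProduct_sub, dotProduct_smul,
          ← mulVec_mulVec, star_dotProduct_map_transpose_mulVec, real_smul]
    _ = _ := by rw [hXPv]

theorem stmt_9_general {n p : ℕ}
    (P H : Matrix (Fin p) (Fin p) ℝ) (X : Matrix (Fin n) (Fin p) ℝ)
    (hPsym : Pᵀ = P) (hPproj : P * P = P)
    (hH : H.PosSemidef) (hHP : H = P * H * P)
    (hinj : ∀ v : Fin p → ℝ, X.mulVec v = 0 → P.mulVec v = v → v = 0) :
    ∀ μ ∈ spectrum ℂ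
        ((P - ((l2OpNorm X) ^ 2)⁻¹ • (P * (1 + H)⁻¹ * P * Xᵀ * X * P)).map
          (fun x : ℝ => (x : ℂ))),
      μ.im = 0 ∧ 0 ≤ μ.re ∧ μ.re < 1 := by
  intro μ hμ
  change μ ∈ spectrum ℂ ((dgdMatrix P (1 + H) X (l2OpNorm X ^ 2)⁻¹).map ofRealHom) at hμ
  obtain ⟨v, hv0, hv⟩ := exists_mulVec_eq_smul_of_mem_spectrum hμ
  rcases eq_or_ne μ 0 with rfl | hμ0
  · simp
  have hPQ : Commute P (1 + H) :=
    (Commute.one_right P).add_right (commute_of_eq_mul_mul hPproj hHP)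
  have hQ : IsUnit (1 + H).det := (PosDef.one.add_posSemidef hH).isUnit.map detMonoidHom
  have hPv : P.map ofRealHom *ᵥ v = v :=
    mulVec_eq_self_of_mul_eq (by rw [← Matrix.map_mul, proj_mul_dgdMatrix X _ hPproj]) hv hμ0
  have hXv := re_star_dotProduct_self_pos (map_ofRealHom_mulVec_ne_zero hinj hv0 hPv)
  have hXle := re_star_dotProduct_mulVec_le_l2OpNorm_sq X v
  have hvQ := re_star_dotProduct_le_one_add_mulVec hH v
  have hN : 0 < l2OpNorm X ^ 2 :=
    pos_of_mul_pos_left (hXv.trans_le hXle) (re_star_dotProduct_self_pos hv0).le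
  refine im_eq_zero_and_re_mem_Ico_of_mul_eq
    (mul_star_dotProduct_eq_of_dgdMatrix_mulVec_eq_smul X _ hPsym hPproj hPQ hQ hv hPv)
    (im_star_dotProduct_map_mulVec_self (isHermitian_one.add hH.1) v) (im_star_dotProduct_self _) (by positivity) ?_
  calc (l2OpNorm X ^ 2)⁻¹ * (star (X.map ofRealHom *ᵥ v) ⬝ᵥ (X.map ofRealHom *ᵥ v)).re
      ≤ (l2OpNorm X ^ 2)⁻¹ * (l2OpNorm X ^ 2 * (star v ⬝ᵥ v).re) := by gcongr
    _ = (star v ⬝ᵥ v).re := inv_mul_cancel_left₀ hN.ne' _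
    _ ≤ _ := hvQ

/-- Spectral radius bound for the DGD linearization matrix
`M = P - ‖X‖⁻² • P (I + H)⁻¹ P Xᵀ X P`: under restricted injectivity of `X`
on the range of the orthogonal projection `P`, all complex eigenvalues of `M`
are real and lie in `[0, 1)`. -/
theorem stmt_9 {n p : ℕ} (hp : 1 ≤ p) (hn : 1 ≤ n)
    (P H : Matrix (Fin p) (Fin p) ℝ) (X : Matrix (Fin n) (Fin p) ℝ)
    (hPsym : Pᵀ = P) (hPproj : P * P = P)
    (hH : H.PosSemidef) (hHP : H = P * H * P)
    (hX : X ≠ 0)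
    (hinj : ∀ v : Fin p → ℝ, X.mulVec v = 0 → P.mulVec v = v → v = 0) :
    ∀ μ ∈ spectrum ℂ
        ((P - ((l2OpNorm X) ^ 2)⁻¹ • (P * (1 + H)⁻¹ * P * Xᵀ * X * P)).map
          (fun x : ℝ => (x : ℂ))),
      μ.im = 0 ∧ 0 ≤ μ.re ∧ μ.re < 1 :=
  stmt_9_general P H X hPsym hPproj hH hHP hinj
end
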